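/- Fix positive integers M and K, complex column vectors h_1,…,h_K ∈ ℂ^M, a real constant c > 0, and a single guaranteed rate r_G > 0 with r_k = r_G for all k (equal-rate system). Let π be any decoding order (permutation of {1,…,K}) that is greedy in the max-SINR sense: for each step u ∈ {1,…,K}, writing L_u = {π(u), π(u+1), …, π(K)} for the not-yet-decoded users, R_{π(u)}^{L_u∖{π(u)}} = max_{j ∈ L_u} R_j^{L_u∖{j}}. Then for every permutation σ of {1,…,K}, |S*_SIC(π)| ≥ |S*_SIC(σ)|; i.e., decoding at each step the remaining user with highest achievable rate maximizes the number of successfully decoded users among all SIC decoding orders. -/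

import Mathlib

/-!
Adding interferers can only lower a user's rate: by the matrix determinant lemma
`R_j^T = log₂ (1 + c h_jᴴ (I + c G_T)⁻¹ h_j)`, and `T ↦ (I + c G_T)⁻¹` is antitone
in the Loewner order.

Suppose an order `σ` decodes its first `u₀ + 1` users, and let `u ≤ u₀`. Among the
`K - u` users `L_u` not yet decoded by the greedy order `e` at step `u`, some user sits
at a position `≤ u` in `σ`; let `σ v` be the earliest one. Every other user of `L_u`
comes after `v` in `σ`, so with a common target rate `r`,
`r ≤ R_{σ v}^{σ(>v)} ≤ R_{σ v}^{L_u ∖ {σ v}} ≤ R_{e u}^{L_u ∖ {e u}}`,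
and `e` decodes at step `u` too.
-/

open Matrix BigOperators

/-- `gram h T = ∑ k ∈ T, h k (h k)^H`, the Gram (interference covariance) matrix of the
channel vectors of the users in `T`. -/
noncomputable def gram {M K : ℕ} (h : Fin K → Fin M → ℂ)
    (T : Finset (Fin K)) : Matrix (Fin M) (Fin M) ℂ :=
  ∑ k ∈ T, Matrix.vecMulVec (h k) (star (h k))

/-- Achievable (sum) rate of the user group `S` under interference from the user group `T`:
`R_S^T = log₂ (det (I + c (G_S + G_T)) / det (I + c G_T))`, both determinants being
positive reals (as determinants of `I` plus a positive semidefinite Hermitian matrix). -/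
noncomputable def rate {M K : ℕ} (h : Fin K → Fin M → ℂ) (c : ℝ)
    (S T : Finset (Fin K)) : ℝ :=
  Real.logb 2
    (((1 + (c : ℂ) • (gram h S + gram h T)).det).re /
      ((1 + (c : ℂ) • gram h T).det).re)

open scoped Classical

/-- The number of users successfully decoded by successive interference cancellation with
decoding order `e` at target rates `r`: with `T_u = {e v : v > u}`, it is `u* - 1` where
`u*` is the first position at which `r (e u) > R_{e u}^{T_u}` (and `K` if no position
fails), i.e. the cardinality of the SIC-decodable set `S*_SIC = {e 1, …, e (u*-1)}`. -/
noncomputable def sicCount {M K : ℕ} (h : Fin K → Fin M → ℂ) (c : ℝ)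
    (r : Fin K → ℝ) (e : Equiv.Perm (Fin K)) : ℕ :=
  (Finset.univ.filter (fun u : Fin K =>
    ∀ v ≤ u, r (e v) ≤ rate h c {e v} ((Finset.Ioi v).image e))).card

open scoped ComplexOrder MatrixOrder

namespace Matrix

variable {n : Type*} [Fintype n]

theorem det_add_vecMulVec [DecidableEq n] {α : Type*} [CommRing α] {A : Matrix n n α}
    (hA : IsUnit A.det) (u v : n → α) :
    (A + vecMulVec u v).det = A.det * (1 + v ⬝ᵥ (A⁻¹ *ᵥ u)) := by
  rw [vecMulVec_eq Unit, det_add_replicateCol_mul_replicateRow hA, det_unique (1 + _),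
    add_apply, one_apply_eq, ← replicateRow_vecMul, replicateRow_mul_replicateCol_apply,
    dotProduct_mulVec]

open scoped Matrix.Norms.L2Operator in
theorem PosDef.inv_le_inv_of_le [DecidableEq n] {A B : Matrix n n ℂ} (hA : A.PosDef)
    (hAB : A ≤ B) : B⁻¹ ≤ A⁻¹ := by
  have hB : B.PosDef := by simpa using hA.add_posSemidef hAB
  lift A to (Matrix n n ℂ)ˣ using hA.isUnit
  lift B to (Matrix n n ℂ)ˣ using hB.isUnit
  simpa [coe_units_inv] using
    CStarAlgebra.inv_le_inv (nonneg_iff_posSemidef.2 hA.posSemidef) hAB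

theorem dotProduct_mulVec_le_of_le {A B : Matrix n n ℂ} (hAB : A ≤ B) (x : n → ℂ) :
    star x ⬝ᵥ (A *ᵥ x) ≤ star x ⬝ᵥ (B *ᵥ x) := by
  simpa [sub_mulVec, dotProduct_sub] using (le_iff.1 hAB).dotProduct_mulVec_nonneg x

end Matrix

section Gram

variable {M K : ℕ} (h : Fin K → Fin M → ℂ)

theorem gram_posSemidef (T : Finset (Fin K)) : (gram h T).PosSemidef :=
  posSemidef_sum T fun k _ => posSemidef_vecMulVec_self_star (h k)

theorem gram_singleton (j : Fin K) : gram h {j} = vecMulVec (h j) (star (h j)) :=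
  Finset.sum_singleton _ _

theorem gram_mono : Monotone (gram h) := by
  intro T T' hTT'
  rw [le_iff, _root_.gram, _root_.gram, ← Finset.sum_sdiff hTT', add_sub_cancel_right]
  exact gram_posSemidef h _

theorem one_add_smul_gram_posDef {c : ℝ} (hc : 0 ≤ c) (T : Finset (Fin K)) :
    (1 + (c : ℂ) • gram h T).PosDef :=
  PosDef.one.add_posSemidef ((gram_posSemidef h T).smul (Complex.zero_le_real.2 hc))

end Gram

noncomputable def sinr {M K : ℕ} (h : Fin K → Fin M → ℂ) (c : ℝ) (j : Fin K)
    (T : Finset (Fin K)) : ℂ :=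
  c * (star (h j) ⬝ᵥ ((1 + (c : ℂ) • gram h T)⁻¹ *ᵥ h j))

section Sinr

variable {M K : ℕ} (h : Fin K → Fin M → ℂ) {c : ℝ} (j : Fin K)

theorem sinr_nonneg (hc : 0 ≤ c) (T : Finset (Fin K)) : 0 ≤ sinr h c j T :=
  mul_nonneg (Complex.zero_le_real.2 hc)
    ((one_add_smul_gram_posDef h hc T).inv.posSemidef.dotProduct_mulVec_nonneg (h j))

theorem sinr_antitone (hc : 0 ≤ c) : Antitone (sinr h c j) := fun T T' hTT' => by
  have hc' : (0 : ℂ) ≤ c := Complex.zero_le_real.2 hc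
  have hA : 1 + (c : ℂ) • gram h T ≤ 1 + (c : ℂ) • gram h T' :=
    add_le_add_right (smul_le_smul_of_nonneg_left (gram_mono h hTT') hc') 1
  exact mul_le_mul_of_nonneg_left
    (dotProduct_mulVec_le_of_le ((one_add_smul_gram_posDef h hc T).inv_le_inv_of_le hA) (h j)) hc'

theorem rate_singleton_eq (hc : 0 ≤ c) (T : Finset (Fin K)) :
    rate h c {j} T = Real.logb 2 (1 + sinr h c j T).re := by
  have hA := one_add_smul_gram_posDef h hc T
  have hdet := Complex.pos_iff.1 hA.det_pos
  have hsplit : 1 + (c : ℂ) • (gram h {j} + gram h T) =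
      (1 + (c : ℂ) • gram h T) + vecMulVec ((c : ℂ) • h j) (star (h j)) := by
    rw [gram_singleton, smul_vecMulVec, smul_add]
    abel
  rw [rate, hsplit, det_add_vecMulVec hA.det_pos.ne'.isUnit, Complex.mul_re, ← hdet.2,
    zero_mul, sub_zero, mul_div_cancel_left₀ _ hdet.1.ne', mulVec_smul, dotProduct_smul,
    smul_eq_mul, sinr, mul_comm (c : ℂ)]

theorem rate_singleton_antitone (hc : 0 ≤ c) : Antitone (rate h c {j}) := fun T T' hTT' => by
  rw [rate_singleton_eq h j hc, rate_singleton_eq h j hc]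
  have hle := Complex.le_def.1 (add_le_add_right (sinr_antitone h j hc hTT') 1)
  have hpos : 0 < (1 + sinr h c j T').re := by
    simpa using add_pos_of_pos_of_nonneg one_pos (Complex.nonneg_iff.1 (sinr_nonneg h j hc T')).1
  exact Real.logb_le_logb_of_le one_lt_two hpos hle.1

end Sinr

section DecodingOrder

variable {K : ℕ}

theorem image_Ici_sdiff_singleton (e : Equiv.Perm (Fin K)) (u : Fin K) :
    (Finset.Ici u).image e \ {e u} = (Finset.Ioi u).image e := by
  rw [← Finset.Ici_erase, Finset.image_erase e.injective, Finset.sdiff_singleton_eq_erase]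

theorem exists_le_mem_image_Ici (e σ : Equiv.Perm (Fin K)) (u : Fin K) :
    ∃ v ≤ u, σ v ∈ (Finset.Ici u).image e ∧
      (Finset.Ici u).image e \ {σ v} ⊆ (Finset.Ioi v).image σ := by
  set L := (Finset.Ici u).image e
  set V := L.map σ.symm.toEmbedding
  have hmemV {w : Fin K} : w ∈ V ↔ σ w ∈ L := by simp [V, Finset.mem_map_equiv]
  have hcard : (Finset.Ioi u).card < V.card := by
    rw [Finset.card_map, Finset.card_image_of_injective _ e.injective, Fin.card_Ici, Fin.card_Ioi]
    omega
  obtain ⟨w, hwV, hwu⟩ := Finset.exists_mem_notMem_of_card_lt_card hcard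
  have hV : V.Nonempty := ⟨w, hwV⟩
  refine ⟨V.min' hV, (V.min'_le w hwV).trans (not_lt.1 (by simpa using hwu)),
    hmemV.1 (V.min'_mem hV), fun x hx => ?_⟩
  obtain ⟨hxL, hxv⟩ := Finset.mem_sdiff.1 hx
  refine Finset.mem_image.2 ⟨σ.symm x, Finset.mem_Ioi.2 ?_, σ.apply_symm_apply x⟩
  refine (V.min'_le _ (hmemV.2 (by simpa using hxL))).lt_of_ne fun hvx => hxv ?_
  simp [hvx]

theorem greedy_decodes_of_decodes {R : Fin K → Finset (Fin K) → ℝ} (hR : ∀ j, Antitone (R j))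
    {e : Equiv.Perm (Fin K)}
    (hgreedy : ∀ u : Fin K, ∀ j ∈ (Finset.Ici u).image e,
      R j ((Finset.Ici u).image e \ {j}) ≤ R (e u) ((Finset.Ici u).image e \ {e u}))
    {σ : Equiv.Perm (Fin K)} {r : ℝ} {u₀ : Fin K}
    (hσ : ∀ v ≤ u₀, r ≤ R (σ v) ((Finset.Ioi v).image σ)) :
    ∀ u ≤ u₀, r ≤ R (e u) ((Finset.Ioi u).image e) := by
  intro u hu
  obtain ⟨v, hvu, hvL, hsub⟩ := exists_le_mem_image_Ici e σ u
  calc r ≤ R (σ v) ((Finset.Ioi v).image σ) := hσ v (hvu.trans hu)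
    _ ≤ R (σ v) ((Finset.Ici u).image e \ {σ v}) := hR _ hsub
    _ ≤ R (e u) ((Finset.Ici u).image e \ {e u}) := hgreedy u _ hvL
    _ = R (e u) ((Finset.Ioi u).image e) := by rw [image_Ici_sdiff_singleton]

end DecodingOrder

theorem stmt_7_general {M K : ℕ} (h : Fin K → Fin M → ℂ)
    (c : ℝ) (hc : 0 < c) (r_G : ℝ)
    (e : Equiv.Perm (Fin K))
    (hgreedy : ∀ u : Fin K, ∀ j ∈ (Finset.Ici u).image e,
      rate h c {j} (((Finset.Ici u).image e) \ {j}) ≤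
        rate h c {e u} (((Finset.Ici u).image e) \ {e u}))
    (σ : Equiv.Perm (Fin K)) :
    sicCount h c (fun _ => r_G) σ ≤ sicCount h c (fun _ => r_G) e :=
  Finset.card_le_card <| Finset.monotone_filter_right _ fun _ _ hσ =>
    greedy_decodes_of_decodes (rate_singleton_antitone h · hc.le) hgreedy hσ

/-- Lemma 5.2 of the paper (optimality of the V-BLAST ordering in an equal-rate system):
if all users transmit at the same rate `r_G > 0` and the decoding order `e` is greedy in the
max-SINR sense — at each step `u`, among the not-yet-decoded users
`L_u = {e u, e (u+1), …, e K}` the user `e u` has the highest achievable rate under the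
interference of the remaining ones — then `e` maximizes the number of SIC-decodable users
over all decoding orders `σ`. -/
theorem stmt_7 {M K : ℕ} (hM : 0 < M) (hK : 0 < K) (h : Fin K → Fin M → ℂ)
    (c : ℝ) (hc : 0 < c) (r_G : ℝ) (hrG : 0 < r_G)
    (e : Equiv.Perm (Fin K))
    (hgreedy : ∀ u : Fin K, ∀ j ∈ (Finset.Ici u).image e,
      rate h c {j} (((Finset.Ici u).image e) \ {j}) ≤
        rate h c {e u} (((Finset.Ici u).image e) \ {e u}))
    (σ : Equiv.Perm (Fin K)) :
    sicCount h c (fun _ => r_G) σ ≤ sicCount h c (fun _ => r_G) e :=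
  stmt_7_general h c hc r_G e hgreedy σ
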